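/- arXiv:2201.02908 — 2 statements merged into one kernel-verified Lean document; each statement's English description precedes it below -/
import Mathlib

section
/- Right invertibility is necessary for decoupling (Proposition 2.12). Let A ∈ ℝ^{n×n}, B ∈ ℝ^{n×m}, C ∈ ℝ^{p×n} with p ≤ m. If there exist F ∈ ℝ^{m×n}, G ∈ ℝ^{m×p}, and positive integers δ_1, …, δ_p such that over ℝ(s) the closed-loop transfer function C (sI − A − BF)⁻¹ B G equals diag(s^{−δ_1}, …, s^{−δ_p}), then the open-loop transfer function T(s) = C (sI − A)⁻¹ B, viewed as a p×m matrix over the field ℝ(s), has rank p (i.e. T(s) is right invertible over ℝ(s)). -/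
noncomputable section
open Matrix

/-- Entrywise embedding of a real matrix into matrices over the field ℝ(s). -/
noncomputable def toRat {k l : ℕ} (M : Matrix (Fin k) (Fin l) ℝ) :
    Matrix (Fin k) (Fin l) (RatFunc ℝ) :=
  M.map (algebraMap ℝ (RatFunc ℝ))

/-- The matrix `s I - M` over ℝ(s). -/
noncomputable def sIm {k : ℕ} (M : Matrix (Fin k) (Fin k) ℝ) :
    Matrix (Fin k) (Fin k) (RatFunc ℝ) :=
  Matrix.scalar (Fin k) (RatFunc.X : RatFunc ℝ) - toRat M

/-! The closed loop factors through the open loop: with `S = sI - A`, the closed-loop resolvent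
`(S - BF)⁻¹` equals `S⁻¹ (1 + BF (S - BF)⁻¹)`, so `C (S - BF)⁻¹ B G = T(s) (G + F (S - BF)⁻¹ B G)`.
A diagonal matrix with nonzero entries has rank `p`, which forces `rank T(s) ≥ p`. -/

theorem mul_inv_sub_mul_mul_eq {R ι κ ρ σ : Type*} [CommRing R] [Fintype ι] [DecidableEq ι]
    [Fintype κ] {S : Matrix ι ι R} {B : Matrix ι κ R} {F : Matrix κ ι R}
    (hS : IsUnit S.det) (hSBF : IsUnit (S - B * F).det) (C : Matrix ρ ι R) (G : Matrix κ σ R) :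
    C * (S - B * F)⁻¹ * B * G = C * S⁻¹ * B * (G + F * (S - B * F)⁻¹ * B * G) := by
  have hresolvent : (S - B * F)⁻¹ = S⁻¹ * (1 + B * F * (S - B * F)⁻¹) := by
    calc (S - B * F)⁻¹ = S⁻¹ * (S * (S - B * F)⁻¹) := by
          rw [← Matrix.mul_assoc, nonsing_inv_mul S hS, Matrix.one_mul]
      _ = S⁻¹ * ((S - B * F + B * F) * (S - B * F)⁻¹) := by rw [sub_add_cancel]
      _ = S⁻¹ * (1 + B * F * (S - B * F)⁻¹) := by
          rw [Matrix.add_mul, mul_nonsing_inv _ hSBF]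
  conv_lhs => rw [hresolvent]
  simp only [Matrix.mul_add, Matrix.add_mul, Matrix.mul_one, Matrix.mul_assoc]

theorem rank_eq_card_of_mul_eq_isUnit {R ι κ : Type*} [CommRing R] [Nontrivial R] [Fintype ι]
    [DecidableEq ι] [Fintype κ] {T : Matrix ι κ R} {X : Matrix κ ι R} {D : Matrix ι ι R}
    (hD : IsUnit D) (hTX : T * X = D) : T.rank = Fintype.card ι := by
  refine le_antisymm T.rank_le_card_height ?_
  calc Fintype.card ι = D.rank := (rank_of_isUnit D hD).symm
    _ = (T * X).rank := by rw [hTX]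
    _ ≤ T.rank := rank_mul_le_left T X

theorem isUnit_diagonal_inv_X_pow {K ι : Type*} [Field K] [Fintype ι] [DecidableEq ι]
    (δ : ι → ℕ) : IsUnit (diagonal fun i => ((RatFunc.X : RatFunc K) ^ δ i)⁻¹) := by
  rw [isUnit_diagonal, Pi.isUnit_iff]
  exact fun i => (pow_ne_zero _ RatFunc.X_ne_zero).isUnit.inv

theorem toRat_add_mul {k l : ℕ} (A : Matrix (Fin k) (Fin k) ℝ) (B : Matrix (Fin k) (Fin l) ℝ)
    (F : Matrix (Fin l) (Fin k) ℝ) : toRat (A + B * F) = toRat A + toRat B * toRat F := by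
  simp only [toRat, Matrix.map_add _ (map_add _), Matrix.map_mul]

theorem sIm_add_mul {k l : ℕ} (A : Matrix (Fin k) (Fin k) ℝ) (B : Matrix (Fin k) (Fin l) ℝ)
    (F : Matrix (Fin l) (Fin k) ℝ) : sIm (A + B * F) = sIm A - toRat B * toRat F := by
  rw [sIm, sIm, toRat_add_mul]
  abel

theorem sIm_eq_map_charmatrix {k : ℕ} (M : Matrix (Fin k) (Fin k) ℝ) :
    sIm M = (algebraMap (Polynomial ℝ) (RatFunc ℝ)).mapMatrix (charmatrix M) := by
  ext i j
  by_cases h : i = j <;>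
    simp [sIm, toRat, charmatrix, h, Matrix.scalar, diagonal, RatFunc.algebraMap_X]

theorem isUnit_det_sIm {k : ℕ} (M : Matrix (Fin k) (Fin k) ℝ) : IsUnit (sIm M).det := by
  rw [sIm_eq_map_charmatrix, ← RingHom.map_det, isUnit_iff_ne_zero,
    map_ne_zero_iff _ (IsFractionRing.injective (Polynomial ℝ) (RatFunc ℝ))]
  exact (charpoly_monic M).ne_zero

theorem right_invertibility_necessary_for_decoupling_general
    (n m p : ℕ)
    (A : Matrix (Fin n) (Fin n) ℝ) (B : Matrix (Fin n) (Fin m) ℝ)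
    (C : Matrix (Fin p) (Fin n) ℝ)
    (F : Matrix (Fin m) (Fin n) ℝ) (G : Matrix (Fin m) (Fin p) ℝ)
    (δ : Fin p → ℕ)
    (hdec : toRat C * (sIm (A + B * F))⁻¹ * toRat B * toRat G =
      Matrix.diagonal fun i => ((RatFunc.X : RatFunc ℝ) ^ δ i)⁻¹) :
    (toRat C * (sIm A)⁻¹ * toRat B).rank = p := by
  have hfactor := mul_inv_sub_mul_mul_eq (isUnit_det_sIm A)
    (sIm_add_mul A B F ▸ isUnit_det_sIm (A + B * F)) (toRat C) (toRat G)
  rw [sIm_add_mul, hfactor] at hdec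
  simpa only [Fintype.card_fin] using
    rank_eq_card_of_mul_eq_isUnit (isUnit_diagonal_inv_X_pow δ) hdec

/-- Right invertibility is necessary for decoupling (Proposition 2.12): if some
static state feedback `(F, G)` yields the diagonal closed loop
`diag (s^{-δ 1}, …, s^{-δ p})` with the `δ i` positive, then the open-loop
transfer function `C (sI - A)⁻¹ B` has rank `p` over ℝ(s). -/
theorem right_invertibility_necessary_for_decoupling
    (n m p : ℕ) (hpm : p ≤ m)
    (A : Matrix (Fin n) (Fin n) ℝ) (B : Matrix (Fin n) (Fin m) ℝ)
    (C : Matrix (Fin p) (Fin n) ℝ)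
    (F : Matrix (Fin m) (Fin n) ℝ) (G : Matrix (Fin m) (Fin p) ℝ)
    (δ : Fin p → ℕ) (hδ : ∀ i, 1 ≤ δ i)
    (hdec : toRat C * (sIm (A + B * F))⁻¹ * toRat B * toRat G =
      Matrix.diagonal fun i => ((RatFunc.X : RatFunc ℝ) ^ δ i)⁻¹) :
    (toRat C * (sIm A)⁻¹ * toRat B).rank = p :=
  right_invertibility_necessary_for_decoupling_general n m p A B C F G δ hdec
end
end

section
/- MIMO numerator formula (equations (151)–(156)). Let A ∈ ℝ^{n×n}, B ∈ ℝ^{n×m}, C ∈ ℝ^{p×n}, and let Δ(s) = Σ_{j=0}^{n} α_j s^j (α_n = 1) be the characteristic polynomial of A. Then over ℝ(s): Δ(s) · C (sI − A)⁻¹ B = Σ_{k=1}^{n} ( Σ_{j=k}^{n} α_j s^{j−k} ) · (C A^{k−1} B), i.e. the transfer function equals m(s)/Δ(s) where m(s) is the p×m polynomial matrix Σ_{k=1}^{n} ( Σ_{j=k}^{n} α_j s^{j−k} ) C A^{k−1} B. -/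
/-!
Horner's scheme: the values `qₖ(s) = Σ_{j ≥ k} αⱼ s^{j-k}` satisfy `qₖ = αₖ + s qₖ₊₁`, so
`(sI - A) Σₖ qₖ(s) A^{k-1}` telescopes to `Δ(s) I - Δ(A)`, which is `Δ(s) I` by Cayley–Hamilton.
Since `Δ ≠ 0` in `ℝ(s)`, this gives `Δ(s) (sI - A)⁻¹ = Σₖ qₖ(s) A^{k-1}`; multiply by `C` and `B`.
-/

noncomputable section
set_option synthInstance.maxHeartbeats 1000000
open Matrix Polynomial

open Finset

namespace Polynomial

variable {S R : Type*} [CommRing S] [Ring R] [Algebra S R]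

/-- The `k`-th value of Horner's scheme for `P` at `s`, that is `(divX^[k] P).eval s` when
`P.natDegree ≤ n`. -/
def hornerTail (P : S[X]) (n k : ℕ) (s : S) : S :=
  ∑ j ∈ Icc k n, P.coeff j * s ^ (j - k)

variable (P : S[X]) {n : ℕ} (s : S)

theorem hornerTail_zero (hP : P.natDegree ≤ n) : P.hornerTail n 0 s = P.eval s := by
  simp only [hornerTail, Nat.sub_zero, eval_eq_sum_range' (Nat.lt_succ_of_le hP),
    Nat.range_succ_eq_Icc_zero]

theorem hornerTail_self : P.hornerTail n n s = P.coeff n := by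
  simp [hornerTail]

theorem hornerTail_eq_coeff_add_mul {k : ℕ} (hk : k < n) :
    P.hornerTail n k s = P.coeff k + s * P.hornerTail n (k + 1) s := by
  rw [hornerTail, hornerTail, ← add_sum_Ioc_eq_sum_Icc hk.le, Nat.sub_self, pow_zero, mul_one,
    ← Icc_add_one_left_eq_Ioc, mul_sum]
  congr 1
  refine sum_congr rfl fun j hj => ?_
  rw [show j - k = j - (k + 1) + 1 by grind, pow_succ']
  ring

theorem algebraMap_sub_mul_sum_hornerTail (hP : P.natDegree ≤ n) (a : R) :
    (algebraMap S R s - a) * ∑ k ∈ Icc 1 n, P.hornerTail n k s • a ^ (k - 1) =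
      algebraMap S R (P.eval s) - aeval a P := by
  have hstep : ∀ k ∈ range n,
      (algebraMap S R s - a) * (P.hornerTail n (k + 1) s • a ^ k) =
        (P.hornerTail n k s • a ^ k - P.hornerTail n (k + 1) s • a ^ (k + 1)) -
          P.coeff k • a ^ k := by
    intro k hk
    rw [hornerTail_eq_coeff_add_mul P s (mem_range.mp hk)]
    simp only [sub_mul, Algebra.algebraMap_eq_smul_one, smul_mul_assoc, one_mul, mul_smul_comm,
      ← pow_succ']
    module
  rw [← Ico_add_one_right_eq_Icc, sum_Ico_eq_sum_range, Nat.add_sub_cancel, mul_sum]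
  simp only [add_comm 1, Nat.add_sub_cancel]
  rw [sum_congr rfl hstep, sum_sub_distrib, sum_range_sub',
    aeval_eq_sum_range' (Nat.lt_succ_of_le hP), sum_range_succ, hornerTail_zero P s hP,
    hornerTail_self, pow_zero, Algebra.algebraMap_eq_smul_one]
  abel

end Polynomial

theorem toRat_mul {k l o : ℕ} (M : Matrix (Fin k) (Fin l) ℝ) (N : Matrix (Fin l) (Fin o) ℝ) :
    toRat (M * N) = toRat M * toRat N :=
  Matrix.map_mul

theorem toRat_pow {k : ℕ} (M : Matrix (Fin k) (Fin k) ℝ) (i : ℕ) :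
    toRat (M ^ i) = toRat M ^ i :=
  map_pow (algebraMap ℝ (RatFunc ℝ)).mapMatrix M i

theorem sIm_eq_algebraMap_sub {k : ℕ} (M : Matrix (Fin k) (Fin k) ℝ) :
    sIm M = algebraMap (RatFunc ℝ) _ RatFunc.X - toRat M := by
  rw [sIm, Matrix.scalar_apply, Matrix.algebraMap_eq_diagonal]; rfl

theorem eval_X_map_algebraMap (p : ℝ[X]) :
    (p.map (algebraMap ℝ (RatFunc ℝ))).eval RatFunc.X = algebraMap ℝ[X] (RatFunc ℝ) p := by
  simpa [eval_map] using eval₂_algebraMap_X p (IsScalarTower.toAlgHom ℝ ℝ[X] (RatFunc ℝ))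

/-- MIMO numerator formula (equations (151)–(156)): with `Δ(s) = Σ αⱼ sʲ` the
characteristic polynomial of `A`,
`Δ(s) · C (sI - A)⁻¹ B = Σ_{k=1}^{n} (Σ_{j=k}^{n} αⱼ s^{j-k}) (C A^{k-1} B)`,
i.e. the transfer function equals `m(s)/Δ(s)`. -/
theorem mimo_numerator_formula
    (n m p : ℕ) (A : Matrix (Fin n) (Fin n) ℝ) (B : Matrix (Fin n) (Fin m) ℝ)
    (C : Matrix (Fin p) (Fin n) ℝ) :
    (algebraMap (Polynomial ℝ) (RatFunc ℝ) A.charpoly) •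
        (toRat C * (sIm A)⁻¹ * toRat B) =
      ∑ k ∈ Finset.Icc 1 n,
        (∑ j ∈ Finset.Icc k n,
            algebraMap ℝ (RatFunc ℝ) (A.charpoly.coeff j) * (RatFunc.X : RatFunc ℝ) ^ (j - k)) •
          toRat (C * A ^ (k - 1) * B) := by
  set Δ := algebraMap ℝ[X] (RatFunc ℝ) A.charpoly
  set P := A.charpoly.map (algebraMap ℝ (RatFunc ℝ))
  set N := ∑ k ∈ Icc 1 n, P.hornerTail n k RatFunc.X • toRat A ^ (k - 1)
  have hΔ : Δ ≠ 0 :=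
    (map_ne_zero_iff _ (RatFunc.algebraMap_injective ℝ)).mpr A.charpoly_monic.ne_zero
  have hN : sIm A * N = Δ • 1 := by
    have hP : P.natDegree ≤ n := natDegree_map_le.trans (by simp)
    have hHorner := P.algebraMap_sub_mul_sum_hornerTail RatFunc.X hP (toRat A)
    have hCH : aeval (toRat A) P = 0 := by
      rw [show P = (toRat A).charpoly from (charpoly_map A _).symm, aeval_self_charpoly]
    rwa [← sIm_eq_algebraMap_sub, eval_X_map_algebraMap, hCH, sub_zero,
      Algebra.algebraMap_eq_smul_one] at hHorner
  have hinv : Δ • (sIm A)⁻¹ = N := by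
    rw [Matrix.inv_eq_right_inv (B := Δ⁻¹ • N) (by rw [Matrix.mul_smul, hN, smul_smul,
      inv_mul_cancel₀ hΔ, one_smul]), smul_smul, mul_inv_cancel₀ hΔ, one_smul]
  rw [← Matrix.smul_mul, ← Matrix.mul_smul, hinv, Matrix.mul_sum, Matrix.sum_mul]
  refine sum_congr rfl fun k _ => ?_
  rw [Matrix.mul_smul, Matrix.smul_mul, toRat_mul, toRat_mul, toRat_pow]
  simp only [P, hornerTail, coeff_map]
end
end
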